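/- arXiv:2508.14384 — 4 statements merged into one kernel-verified Lean document; each statement's English description precedes it below -/
import Mathlib

section
/- For any two strings x and y (over possibly different alphabets), the maximal even-palindrome arrays of x and y are equal if and only if the longest even-palindrome arrays of x and y are equal. (Equality of arrays in particular forces |x| = |y|.) -/
/-- The factor `w[i..j]` of `w`, from position `i` to position `j` inclusive
(the empty string when `i > j`). -/
def factor {α : Type*} (w : List α) (i j : ℕ) : List α :=
  (w.drop i).take (j + 1 - i)

/-- A string is a palindrome if it equals its reverse. -/
def IsPal {α : Type*} (l : List α) : Prop := l.reverse = l

/-- `MEPal w c` is the length of the longest palindromic factor of `w` of the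
form `w[c-r..c+r-1]` (with `r ≥ 0`, `c - r ≥ 0`, `c + r ≤ |w|`). -/
noncomputable def MEPal {α : Type*} (w : List α) (c : ℕ) : ℕ :=
  2 * sSup {r : ℕ | r ≤ c ∧ c + r ≤ w.length ∧ IsPal (factor w (c - r) (c + r - 1))}

/-- The maximal even-palindrome array of `w`. -/
noncomputable def MEPalArr {α : Type*} (w : List α) : List ℕ :=
  (List.range w.length).map (MEPal w)

/-- `LEPal w j` is the length of the longest even-length palindromic suffix of
the prefix `w[0..j]`. -/
noncomputable def LEPal {α : Type*} (w : List α) (j : ℕ) : ℕ :=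
  sSup {ℓ : ℕ | ℓ % 2 = 0 ∧ ℓ ≤ j + 1 ∧ IsPal (factor w (j + 1 - ℓ) j)}

/-- The longest even-palindrome array of `w`. -/
noncomputable def LEPalArr {α : Type*} (w : List α) : List ℕ :=
  (List.range w.length).map (LEPal w)

/-- A positive integer `p` is a period of `u` if `u[i] = u[i+p]` for all
`0 ≤ i ≤ |u| - p - 1`. -/
def HasPeriod {α : Type*} (u : List α) (p : ℕ) : Prop :=
  ∀ i, i + p < u.length → u[i]? = u[i + p]?

/-!
Both arrays of a string `w` carry exactly the information which even-length factors
`w[i..i+2r-1]` are palindromes. For `MEPal` this holds because an even palindrome centred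
at `c` contains all shorter ones centred at `c`. For `LEPal` one recovers the even palindromes
ending at `j` by strong induction on `j`: one that is longer than `LEPal w j` does not exist,
one of that length is the longest even palindromic suffix itself, and a shorter one is the
mirror image, inside that suffix, of an even palindrome ending earlier.
-/

section Palindromes

variable {α : Type*}

lemma isPal_iff_getElem? (l : List α) :
    IsPal l ↔ ∀ a b, a + b + 1 = l.length → l[a]? = l[b]? := by
  constructor
  · intro h a b hab
    conv_lhs => rw [← h]
    rw [List.getElem?_reverse (by omega), show l.length - 1 - a = b by omega]
  · intro h
    refine List.ext_getElem? fun k => ?_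
    by_cases hk : k < l.length
    · rw [List.getElem?_reverse hk]
      exact h _ _ (by omega)
    · rw [List.getElem?_eq_none (by simpa using hk), List.getElem?_eq_none (by omega)]

lemma isPal_of_length_le_one {l : List α} (h : l.length ≤ 1) : IsPal l :=
  (isPal_iff_getElem? l).2 fun a b hab => by rw [show a = b by omega]

/-- `w[i..i+m-1]` is a palindrome. -/
def IsPalAt (w : List α) (i m : ℕ) : Prop :=
  ∀ a b, a + b + 1 = m → w[i + a]? = w[i + b]?

lemma isPalAt_zero (w : List α) (i : ℕ) : IsPalAt w i 0 :=
  fun _ _ h => absurd h (by omega)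

lemma isPal_factor_iff {w : List α} {i m : ℕ} (h : i + m ≤ w.length) :
    IsPal (factor w i (i + m - 1)) ↔ IsPalAt w i m := by
  rcases Nat.eq_zero_or_pos m with rfl | hm
  -- `i + 0 - 1` truncates, so for `i = 0` the factor is `w[0..0]`, of length up to one.
  · refine iff_of_true (isPal_of_length_le_one ?_) (isPalAt_zero w i)
    simp only [factor, List.length_take]
    omega
  · have hlen : (factor w i (i + m - 1)).length = m := by
      simp only [factor, List.length_take, List.length_drop]
      omega
    have hget : ∀ k < m, (factor w i (i + m - 1))[k]? = w[i + k]? := fun k hk => by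
      rw [factor, List.getElem?_take, if_pos (by omega), List.getElem?_drop]
    rw [isPal_iff_getElem?, hlen]
    refine forall₂_congr fun a b => imp_congr_right fun hab => ?_
    rw [hget a (by omega), hget b (by omega)]

lemma IsPalAt.inner {w : List α} {i m d : ℕ} (h : IsPalAt w i (m + 2 * d)) :
    IsPalAt w (i + d) m := fun a b hab => by
  simpa only [Nat.add_assoc] using h (d + a) (d + b) (by omega)

lemma IsPalAt.suffix_iff_prefix {w : List α} {i m m' : ℕ} (h : IsPalAt w i m)
    (hm' : m' ≤ m) : IsPalAt w (i + (m - m')) m' ↔ IsPalAt w i m' := by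
  have mirror : ∀ a b, a + b + 1 = m' → w[i + (m - m') + a]? = w[i + b]? := fun a b hab => by
    simpa only [Nat.add_assoc] using h (m - m' + a) b (by omega)
  constructor
  · intro hs a b hab
    rw [← mirror b a (by omega), ← mirror a b hab]
    exact hs b a (by omega)
  · intro hp a b hab
    rw [mirror a b hab, mirror b a (by omega)]
    exact hp b a (by omega)

end Palindromes

lemma Nat.le_sSup_iff_mem {S : Set ℕ} (hS : IsLowerSet S) (hne : S.Nonempty)
    (hbdd : BddAbove S) {r : ℕ} : r ≤ sSup S ↔ r ∈ S :=
  ⟨fun h => hS h (Nat.sSup_mem hne hbdd), fun h => le_csSup hbdd h⟩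

lemma List.map_range_eq_map_range_iff {γ : Type*} {f g : ℕ → γ} {m n : ℕ} :
    (List.range m).map f = (List.range n).map g ↔ m = n ∧ ∀ c < m, f c = g c := by
  constructor
  · intro h
    have hmn : m = n := by simpa using congrArg List.length h
    subst hmn
    refine ⟨rfl, fun c hc => ?_⟩
    simpa [List.getElem?_range hc] using congrArg (·[c]?) h
  · rintro ⟨rfl, h⟩
    exact List.map_congr_left fun c hc => h c (List.mem_range.1 hc)

section MaximalEvenPalindromes

variable {α β : Type*}

def SameEvenPals (x : List α) (y : List β) : Prop :=
  ∀ i r, i + 2 * r ≤ x.length → (IsPalAt x i (2 * r) ↔ IsPalAt y i (2 * r))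

lemma MEPal_eq (w : List α) (c : ℕ) :
    MEPal w c = 2 * sSup {r | r ≤ c ∧ c + r ≤ w.length ∧ IsPalAt w (c - r) (2 * r)} := by
  unfold MEPal
  congr 2
  ext r
  refine and_congr_right fun _ => and_congr_right fun _ => ?_
  rw [show c + r - 1 = c - r + 2 * r - 1 by omega]
  exact isPal_factor_iff (by omega)

lemma le_MEPal_iff {w : List α} {c : ℕ} (hc : c ≤ w.length) (r : ℕ) :
    2 * r ≤ MEPal w c ↔ r ≤ c ∧ c + r ≤ w.length ∧ IsPalAt w (c - r) (2 * r) := by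
  rw [MEPal_eq, Nat.mul_le_mul_left_iff two_pos]
  refine Nat.le_sSup_iff_mem ?_ ⟨0, by simpa [hc] using isPalAt_zero w c⟩ ⟨c, fun _ h => h.1⟩
  rintro r s hsr ⟨hrc, hrn, hpal⟩
  refine ⟨by omega, by omega, ?_⟩
  rw [show 2 * r = 2 * s + 2 * (r - s) by omega] at hpal
  simpa only [show c - r + (r - s) = c - s by omega] using hpal.inner

variable {x : List α} {y : List β}

lemma sameEvenPals_iff_MEPal_eq (hn : x.length = y.length) :
    SameEvenPals x y ↔ ∀ c < x.length, MEPal x c = MEPal y c := by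
  constructor
  · intro hS c hc
    rw [MEPal_eq, MEPal_eq, ← hn]
    congr 2
    ext r
    exact and_congr_right fun _ => and_congr_right fun _ => hS (c - r) r (by omega)
  · intro hM i r hle
    rcases Nat.eq_zero_or_pos r with rfl | hr
    · exact iff_of_true (isPalAt_zero x i) (isPalAt_zero y i)
    have hx := le_MEPal_iff (w := x) (c := i + r) (by omega) r
    have hy := le_MEPal_iff (w := y) (c := i + r) (by omega) r
    rw [hM (i + r) (by omega), hy, Nat.add_sub_cancel] at hx
    exact ⟨fun h => (hx.2 ⟨by omega, by omega, h⟩).2.2,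
      fun h => (hx.1 ⟨by omega, by omega, h⟩).2.2⟩

lemma MEPalArr_eq_iff : MEPalArr x = MEPalArr y ↔ x.length = y.length ∧ SameEvenPals x y := by
  rw [MEPalArr, MEPalArr, List.map_range_eq_map_range_iff]
  exact and_congr_right fun hn => (sameEvenPals_iff_MEPal_eq hn).symm

end MaximalEvenPalindromes

section LongestEvenPalindromes

variable {α β : Type*}

lemma LEPal_eq {w : List α} {j : ℕ} (hj : j < w.length) :
    LEPal w j = sSup {ℓ | ℓ % 2 = 0 ∧ ℓ ≤ j + 1 ∧ IsPalAt w (j + 1 - ℓ) ℓ} := by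
  unfold LEPal
  congr 1
  ext ℓ
  refine and_congr_right fun _ => and_congr_right fun _ => ?_
  have := isPal_factor_iff (w := w) (i := j + 1 - ℓ) (m := ℓ) (by omega)
  rwa [show j + 1 - ℓ + ℓ - 1 = j by omega] at this

lemma LEPal_spec {w : List α} {j : ℕ} (hj : j < w.length) :
    LEPal w j % 2 = 0 ∧ LEPal w j ≤ j + 1 ∧ IsPalAt w (j + 1 - LEPal w j) (LEPal w j) := by
  rw [LEPal_eq hj]
  exact Nat.sSup_mem (s := {ℓ | ℓ % 2 = 0 ∧ ℓ ≤ j + 1 ∧ IsPalAt w (j + 1 - ℓ) ℓ})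
    ⟨0, rfl, by omega, isPalAt_zero w _⟩ ⟨j + 1, fun _ h => h.2.1⟩

lemma le_LEPal {w : List α} {j ℓ : ℕ} (hj : j < w.length)
    (h : ℓ % 2 = 0 ∧ ℓ ≤ j + 1 ∧ IsPalAt w (j + 1 - ℓ) ℓ) : ℓ ≤ LEPal w j := by
  rw [LEPal_eq hj]
  exact le_csSup ⟨j + 1, fun _ h => h.2.1⟩ h

variable {x : List α} {y : List β}

lemma sameEvenPals_of_LEPal_eq (hn : x.length = y.length)
    (hL : ∀ j < x.length, LEPal x j = LEPal y j) : SameEvenPals x y := by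
  suffices key : ∀ e i r, i + 2 * r = e → e ≤ x.length →
      (IsPalAt x i (2 * r) ↔ IsPalAt y i (2 * r)) from
    fun i r hle => key _ i r rfl hle
  intro e
  induction e using Nat.strong_induction_on with
  | _ e ih =>
  intro i r hir he
  cases e with
  | zero =>
    obtain rfl : r = 0 := by omega
    exact iff_of_true (isPalAt_zero x i) (isPalAt_zero y i)
  | succ j =>
  have hjx : j < x.length := by omega
  have hjy : j < y.length := hn ▸ hjx
  obtain ⟨hev, hℓj, hpx⟩ := LEPal_spec hjx
  have hpy := (LEPal_spec hjy).2.2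
  rw [← hL j hjx] at hpy
  set ℓ := LEPal x j
  rcases lt_trichotomy (2 * r) ℓ with hlt | heq | hgt
  · rw [show i = j + 1 - ℓ + (ℓ - 2 * r) by omega, hpx.suffix_iff_prefix hlt.le,
      hpy.suffix_iff_prefix hlt.le]
    exact ih (j + 1 - ℓ + 2 * r) (by omega) _ r rfl (by omega)
  · rw [show i = j + 1 - ℓ by omega, heq]
    exact iff_of_true hpx hpy
  · have hi : j + 1 - 2 * r = i := by omega
    refine iff_of_false (fun h => ?_) (fun h => ?_)
    · have := le_LEPal hjx ⟨by omega, by omega, hi ▸ h⟩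
      omega
    · have := le_LEPal hjy ⟨by omega, by omega, hi ▸ h⟩
      rw [← hL j hjx] at this
      omega

lemma sameEvenPals_iff_LEPal_eq (hn : x.length = y.length) :
    SameEvenPals x y ↔ ∀ j < x.length, LEPal x j = LEPal y j := by
  refine ⟨fun hS j hj => ?_, sameEvenPals_of_LEPal_eq hn⟩
  rw [LEPal_eq hj, LEPal_eq (hn ▸ hj)]
  congr 1
  ext ℓ
  refine and_congr_right fun hev => and_congr_right fun hℓ => ?_
  obtain ⟨r, rfl⟩ : ∃ r, ℓ = 2 * r := ⟨ℓ / 2, by omega⟩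
  exact hS _ r (by omega)

lemma LEPalArr_eq_iff : LEPalArr x = LEPalArr y ↔ x.length = y.length ∧ SameEvenPals x y := by
  rw [LEPalArr, LEPalArr, List.map_range_eq_map_range_iff]
  exact and_congr_right fun hn => (sameEvenPals_iff_LEPal_eq hn).symm

end LongestEvenPalindromes

theorem stmt0 {α β : Type*} (x : List α) (y : List β) :
    MEPalArr x = MEPalArr y ↔ LEPalArr x = LEPalArr y := by
  rw [MEPalArr_eq_iff, LEPalArr_eq_iff]
end

section
/- Let w be a string, let r ≥ 1, and let c_1 < c_2 be integers with c_2 − c_1 ≤ r, c_1 − r ≥ 0 and c_2 + r ≤ |w|. If both w[c_1−r..c_1+r−1] and w[c_2−r..c_2+r−1] are palindromes, then the factor w[c_1−r..c_2+r−1] has period 2(c_2 − c_1). -/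
section

variable {α : Type*}

lemma getElem?_factor {w : List α} {i j k : ℕ} (hk : i + k ≤ j) :
    (factor w i j)[k]? = w[i + k]? := by
  rw [factor, List.getElem?_take, if_pos (by omega), List.getElem?_drop]

lemma length_factor {w : List α} {i j : ℕ} (hij : i ≤ j) (hj : j < w.length) :
    (factor w i j).length = j + 1 - i := by
  simp only [factor, List.length_take, List.length_drop]
  omega

lemma IsPal.getElem?_eq {l : List α} (hp : IsPal l) {k : ℕ} (hk : k < l.length) :
    l[k]? = l[l.length - 1 - k]? := by
  conv_lhs => rw [← hp]
  exact List.getElem?_reverse hk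

lemma IsPal.getElem?_eq_of_factor {w : List α} {i j x y : ℕ} (hp : IsPal (factor w i j))
    (hj : j < w.length) (hix : i ≤ x) (hxj : x ≤ j) (hxy : x + y = i + j) :
    w[x]? = w[y]? := by
  have hlen := length_factor (w := w) (hix.trans hxj) hj
  have h := hp.getElem?_eq (k := x - i) (by omega)
  rw [hlen, getElem?_factor (by omega), getElem?_factor (by omega)] at h
  convert h using 2 <;> omega

/-- Reflecting `x` about the centre `c₁` and then about `c₂` shifts it by `2 (c₂ - c₁)`. -/
lemma getElem?_eq_getElem?_add_of_isPal_of_isPal {w : List α} {r c₁ c₂ x : ℕ}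
    (h₁₂ : c₁ ≤ c₂) (hr : r ≤ c₁) (hw : c₂ + r ≤ w.length)
    (p₁ : IsPal (factor w (c₁ - r) (c₁ + r - 1))) (p₂ : IsPal (factor w (c₂ - r) (c₂ + r - 1)))
    (hx : c₁ - r ≤ x) (hx' : x + 2 * (c₂ - c₁) < c₂ + r) :
    w[x]? = w[x + 2 * (c₂ - c₁)]? :=
  calc w[x]? = w[2 * c₁ - 1 - x]? :=
        p₁.getElem?_eq_of_factor (by omega) hx (by omega) (by omega)
    _ = w[x + 2 * (c₂ - c₁)]? :=
        p₂.getElem?_eq_of_factor (by omega) (by omega) (by omega) (by omega)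

end

theorem stmt3_general {α : Type*} (w : List α) (r c1 c2 : ℕ)
    (h12 : c1 < c2) (h1 : r ≤ c1) (h2 : c2 + r ≤ w.length)
    (p1 : IsPal (factor w (c1 - r) (c1 + r - 1)))
    (p2 : IsPal (factor w (c2 - r) (c2 + r - 1))) :
    HasPeriod (factor w (c1 - r) (c2 + r - 1)) (2 * (c2 - c1)) := by
  intro i hi
  rw [length_factor (by omega) (by omega)] at hi
  rw [getElem?_factor (by omega), getElem?_factor (by omega), ← Nat.add_assoc]
  exact getElem?_eq_getElem?_add_of_isPal_of_isPal h12.le h1 h2 p1 p2 (by omega) (by omega)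

theorem stmt3 {α : Type*} (w : List α) (r c1 c2 : ℕ) (hr : 1 ≤ r)
    (h12 : c1 < c2) (hdist : c2 - c1 ≤ r) (h1 : r ≤ c1) (h2 : c2 + r ≤ w.length)
    (p1 : IsPal (factor w (c1 - r) (c1 + r - 1)))
    (p2 : IsPal (factor w (c2 - r) (c2 + r - 1))) :
    HasPeriod (factor w (c1 - r) (c2 + r - 1)) (2 * (c2 - c1)) :=
  stmt3_general w r c1 c2 h12 h1 h2 p1 p2
end

section
/- Let w be a string and let 0 ≤ a ≤ c ≤ b ≤ d < |w|. If w[a..b] and w[c..d] are both palindromes and w[a..b] = w[c..d] as strings, then w[a..d] is a palindrome (possibly of odd length). -/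
theorem isPal_append_of_append_eq_append {α : Type*} {x u y : List α} (hu : IsPal u)
    (h : x ++ u = u ++ y) (hxu : x.length ≤ u.length) : IsPal (x ++ u) := by
  obtain ⟨z, hxz⟩ : x <+: u :=
    List.prefix_of_prefix_length_le (h ▸ List.prefix_append x u) (List.prefix_append u y) hxu
  have hzy : u = z ++ y := by
    rw [← hxz, List.append_assoc, List.append_cancel_left_eq] at h
    rw [← hxz, h]
  have hy : y = x.reverse := by
    have hrev : z.reverse ++ x.reverse = z ++ y := by
      rw [← List.reverse_append, hxz, hu, hzy]
    exact ((List.append_inj hrev (by simp)).2).symm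
  calc (x ++ u).reverse = u.reverse ++ x.reverse := List.reverse_append
    _ = u ++ y := by rw [hu, hy]
    _ = x ++ u := h.symm

theorem length_factor_of_lt {α : Type*} (w : List α) {i j : ℕ} (hj : j < w.length) :
    (factor w i j).length = j + 1 - i := by
  simp only [factor, List.length_take, List.length_drop]
  omega

theorem factor_eq_take_drop_append {α : Type*} (w : List α) {i j k : ℕ} (hij : i ≤ j)
    (hjk : j ≤ k + 1) : factor w i k = (w.drop i).take (j - i) ++ factor w j k := by
  rw [factor, show k + 1 - i = (j - i) + (k + 1 - j) by omega, List.take_add, List.drop_drop,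
    show i + (j - i) = j by omega, factor]

theorem factor_eq_append_take_drop {α : Type*} (w : List α) {i j k : ℕ} (hij : i ≤ j + 1)
    (hjk : j ≤ k) : factor w i k = factor w i j ++ (w.drop (j + 1)).take (k - j) := by
  rw [factor, show k + 1 - i = (j + 1 - i) + (k - j) by omega, List.take_add, List.drop_drop,
    show i + (j + 1 - i) = j + 1 by omega, factor]

theorem stmt5_general {α : Type*} (w : List α) (a b c d : ℕ)
    (hac : a ≤ c) (hcb : c ≤ b) (hbd : b ≤ d) (hd : d < w.length)
    (p2 : IsPal (factor w c d))
    (heq : factor w a b = factor w c d) :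
    IsPal (factor w a d) := by
  have hx := factor_eq_take_drop_append w hac (show c ≤ d + 1 by omega)
  have hy := factor_eq_append_take_drop w (show a ≤ b + 1 by omega) hbd
  have hshift := hx.symm.trans (heq ▸ hy)
  rw [hx]
  refine isPal_append_of_append_eq_append p2 hshift ?_
  calc ((w.drop a).take (c - a)).length
      = ((w.drop (b + 1)).take (d - b)).length := by
        have := congrArg List.length hshift
        simp only [List.length_append] at this
        omega
    _ ≤ d - b := List.length_take_le _ _
    _ ≤ (factor w c d).length := by rw [length_factor_of_lt w hd]; omega

theorem stmt5 {α : Type*} (w : List α) (a b c d : ℕ)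
    (hac : a ≤ c) (hcb : c ≤ b) (hbd : b ≤ d) (hd : d < w.length)
    (p1 : IsPal (factor w a b)) (p2 : IsPal (factor w c d))
    (heq : factor w a b = factor w c d) :
    IsPal (factor w a d) :=
  stmt5_general w a b c d hac hcb hbd hd p2 heq
end

section
/- Let w be a string of length n and let 0 ≤ i ≤ j ≤ n−1. Define: ℓ_p as the length of the longest palindromic prefix of w[i..j]; ℓ_s as the length of the longest palindromic suffix of w[i..j]; and ℓ_m as the maximum length of a nonempty maximal palindrome w[a..b] of w satisfying i+1 ≤ a and b ≤ j−1 (with ℓ_m = 0 if no such factor exists). Then the length of the longest palindromic factor of w[i..j] equals max(ℓ_p, ℓ_s, ℓ_m). -/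
/-!
Extend a palindromic factor `w[a..b]` of `w[i..j]` symmetrically about its centre to a maximal
palindrome `w[a₀..b₀]` of `w`. If it stays within `w[i+1..j-1]` it is counted by `ℓ_m`;
otherwise it reaches past `i` or `j`, and, according to which half of `w[i..j]` holds the centre,
cutting it at that boundary leaves a palindromic prefix `w[i..a+b-i]` or suffix `w[a+b-j..j]` of
`w[i..j]`, which is at least as long as `w[a..b]`.
-/

lemma length_le_sSup_lengths {α : Type*} {p : List α → Prop} {n : ℕ}
    (hp : ∀ x, p x → x.length ≤ n) {v : List α} (hv : p v) :
    v.length ≤ sSup {ℓ | ∃ x, x.length = ℓ ∧ p x} :=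
  le_csSup ⟨n, by rintro _ ⟨x, rfl, hx⟩; exact hp x hx⟩ ⟨v, rfl, hv⟩

section Factor

variable {α : Type*} (w : List α)

lemma factor_length {a b : ℕ} (hb : b < w.length) : (factor w a b).length = b + 1 - a := by
  simp only [factor, List.length_take, List.length_drop]
  omega

lemma drop_factor (i j k : ℕ) : (factor w i j).drop k = factor w (i + k) j := by
  simp only [factor, List.drop_take, List.drop_drop]
  congr 1
  omega

lemma take_factor {i j c : ℕ} (hc : c ≤ j) : (factor w i j).take (c + 1 - i) = factor w i c := by
  simp only [factor, List.take_take]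
  congr 1
  omega

lemma factor_isPrefix_factor {i j c : ℕ} (hc : c ≤ j) : factor w i c <+: factor w i j :=
  take_factor w hc ▸ List.take_prefix _ _

lemma factor_isSuffix_factor {i j c : ℕ} (hc : i ≤ c) : factor w c j <:+ factor w i j := by
  simpa only [drop_factor, Nat.add_sub_cancel' hc] using List.drop_suffix (c - i) (factor w i j)

lemma factor_isInfix_factor {i j a b : ℕ} (hia : i ≤ a) (hbj : b ≤ j) :
    factor w a b <:+: factor w i j :=
  (factor_isPrefix_factor w hbj).isInfix.trans (factor_isSuffix_factor w hia).isInfix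

lemma exists_eq_factor_of_isInfix_factor {v : List α} {i j : ℕ} (hv : v <:+: factor w i j)
    (hne : v ≠ []) : ∃ a b, i ≤ a ∧ a ≤ b ∧ b ≤ j ∧ factor w a b = v := by
  obtain ⟨s, t, hst⟩ := hv
  have hlen := congrArg List.length hst
  have hv₀ := List.length_pos_of_ne_nil hne
  simp only [List.length_append, factor, List.length_take, List.length_drop] at hlen
  have hc : i + s.length + v.length - 1 ≤ j := by omega
  refine ⟨i + s.length, _, by omega, by omega, hc, ?_⟩
  rw [← take_factor w hc, ← drop_factor w i j s.length, ← hst, List.append_assoc, List.drop_left,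
    show i + s.length + v.length - 1 + 1 - (i + s.length) = v.length by omega, List.take_left]

lemma factor_eq_cons {a b : ℕ} (hab : a ≤ b) (hb : b < w.length) :
    factor w a b = w[a] :: factor w (a + 1) b := by
  rw [factor, List.drop_eq_getElem_cons (by omega),
    show b + 1 - a = b + 1 - (a + 1) + 1 by omega, List.take_succ_cons]
  rfl

lemma factor_succ_right {a b : ℕ} (hab : a ≤ b + 1) (hb : b + 1 < w.length) :
    factor w a (b + 1) = factor w a b ++ [w[b + 1]] := by
  rw [factor, factor, show b + 1 + 1 - a = b + 1 - a + 1 by omega, List.take_add_one,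
    List.getElem?_drop, show a + (b + 1 - a) = b + 1 by omega, List.getElem?_eq_getElem hb]
  rfl

end Factor

section Palindrome

variable {α : Type*}

lemma IsPal.drop_take {l : List α} (h : IsPal l) (k : ℕ) :
    IsPal ((l.drop k).take (l.length - 2 * k)) := by
  rcases le_or_gt l.length (2 * k) with hk | hk
  · simp [IsPal, Nat.sub_eq_zero_of_le hk]
  unfold IsPal at *
  have h₁ : (l.drop k).take (l.length - 2 * k) = (l.take (l.length - k)).drop k := by
    rw [List.drop_take]
    congr 1
    omega
  rw [h₁, List.reverse_drop, List.reverse_take, h, List.drop_take, List.length_take]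
  congr 1
  · omega
  · congr 1
    omega

def IsMaximalPal (w : List α) (a b : ℕ) : Prop :=
  IsPal (factor w a b) ∧ (a = 0 ∨ b = w.length - 1 ∨ w[a - 1]? ≠ w[b + 1]?)

variable (w : List α)

lemma IsPal.factor_of_add_eq {a b x y : ℕ} (hpal : IsPal (factor w a b)) (hb : b < w.length)
    (hax : a ≤ x) (hxy : x + y = a + b) : IsPal (factor w x y) := by
  have h := hpal.drop_take (x - a)
  rwa [factor_length w hb, drop_factor, Nat.add_sub_cancel' hax,
    show b + 1 - a - 2 * (x - a) = y + 1 - x by omega, take_factor w (by omega)] at h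

lemma IsPal.factor_extend {a b : ℕ} (hpal : IsPal (factor w (a + 1) b)) (hab : a ≤ b)
    (hb : b + 1 < w.length) (heq : w[a]? = w[b + 1]?) : IsPal (factor w a (b + 1)) := by
  have hend : w[a] = w[b + 1] := by
    rwa [List.getElem?_eq_getElem (by omega), List.getElem?_eq_getElem hb,
      Option.some_inj] at heq
  rw [factor_eq_cons w (by omega) hb, factor_succ_right w (by omega) hb]
  unfold IsPal at hpal ⊢
  simp [hpal, hend]

lemma exists_isMaximalPal_of_isPal {a b : ℕ} (hab : a ≤ b + 1) (hb : b < w.length)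
    (hpal : IsPal (factor w a b)) :
    ∃ a₀ b₀, a₀ ≤ a ∧ a₀ + b₀ = a + b ∧ b₀ < w.length ∧ IsMaximalPal w a₀ b₀ := by
  induction a generalizing b with
  | zero => exact ⟨0, b, le_rfl, rfl, hb, hpal, .inl rfl⟩
  | succ a ih =>
    by_cases hext : b + 1 < w.length ∧ w[a]? = w[b + 1]?
    · obtain ⟨a₀, b₀, ha₀, hsum, hb₀, hmax⟩ :=
        ih (by omega) hext.1 (hpal.factor_extend w (by omega) hext.1 hext.2)
      exact ⟨a₀, b₀, by omega, by omega, hb₀, hmax⟩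
    · refine ⟨a + 1, b, le_rfl, rfl, hb, hpal, .inr ?_⟩
      rcases not_and_or.mp hext with h | h
      · exact .inl (by omega)
      · exact .inr h

lemma isPal_factor_trichotomy {i j a b : ℕ} (hj : j < w.length) (hia : i ≤ a) (hab : a ≤ b)
    (hbj : b ≤ j) (hpal : IsPal (factor w a b)) :
    (∃ a₀ b₀, i + 1 ≤ a₀ ∧ a₀ ≤ b₀ ∧ b₀ + 1 ≤ j ∧ IsMaximalPal w a₀ b₀ ∧ b - a ≤ b₀ - a₀) ∨
      (a + b ≤ i + j ∧ IsPal (factor w i (a + b - i))) ∨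
      (i + j < a + b ∧ IsPal (factor w (a + b - j) j)) := by
  obtain ⟨a₀, b₀, ha₀, hsum, hb₀, hmax⟩ :=
    exists_isMaximalPal_of_isPal w (by omega) (by omega) hpal
  by_cases hin : i + 1 ≤ a₀ ∧ b₀ + 1 ≤ j
  · exact .inl ⟨a₀, b₀, hin.1, by omega, hin.2, hmax, by omega⟩
  rcases le_or_gt (a + b) (i + j) with hc | hc
  · exact .inr (.inl ⟨hc, hmax.1.factor_of_add_eq w hb₀ (by omega) (by omega)⟩)
  · exact .inr (.inr ⟨hc, hmax.1.factor_of_add_eq w hb₀ (by omega) (by omega)⟩)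

end Palindrome

theorem stmt10_general {α : Type*} (w : List α) (i j : ℕ) (hj : j < w.length) :
    sSup {ℓ : ℕ | ∃ v : List α, v.length = ℓ ∧ v <:+: factor w i j ∧ IsPal v} =
      max (max
        (sSup {ℓ : ℕ | ∃ v : List α, v.length = ℓ ∧ v <+: factor w i j ∧ IsPal v})
        (sSup {ℓ : ℕ | ∃ v : List α, v.length = ℓ ∧ v <:+ factor w i j ∧ IsPal v}))
        (sSup {ℓ : ℕ | ∃ a b : ℕ, i + 1 ≤ a ∧ a ≤ b ∧ b + 1 ≤ j ∧
          IsPal (factor w a b) ∧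
          (a = 0 ∨ b = w.length - 1 ∨ w[a - 1]? ≠ w[b + 1]?) ∧
          ℓ = b - a + 1}) := by
  apply le_antisymm
  · refine csSup_le' ?_
    rintro _ ⟨v, rfl, hv, hpal⟩
    rcases eq_or_ne v [] with rfl | hne
    · exact Nat.zero_le _
    obtain ⟨a, b, hia, hab, hbj, rfl⟩ := exists_eq_factor_of_isInfix_factor w hv hne
    rw [factor_length w (hbj.trans_lt hj)]
    rcases isPal_factor_trichotomy w hj hia hab hbj hpal with
      ⟨a₀, b₀, h₁, h₂, h₃, hmax, hlen⟩ | ⟨hc, hpre⟩ | ⟨hc, hsuf⟩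
    · refine le_max_of_le_right (le_csSup_of_le ⟨j, ?_⟩
        ⟨a₀, b₀, h₁, h₂, h₃, hmax.1, hmax.2, rfl⟩ (by omega))
      rintro _ ⟨_, _, -, hab', hbj', -, -, rfl⟩
      omega
    · refine le_max_of_le_left (le_max_of_le_left (le_trans ?_ (length_le_sSup_lengths
        (fun _ hx => hx.1.length_le) ⟨factor_isPrefix_factor w (c := a + b - i) (by omega), hpre⟩)))
      rw [factor_length w (by omega)]
      omega
    · refine le_max_of_le_left (le_max_of_le_right (le_trans ?_ (length_le_sSup_lengths
        (fun _ hx => hx.1.length_le) ⟨factor_isSuffix_factor w (c := a + b - j) (by omega), hsuf⟩)))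
      rw [factor_length w hj]
      omega
  · have hinfix {v : List α} (hv : v <:+: factor w i j) (hpal : IsPal v) :
        v.length ≤ sSup {ℓ | ∃ v, v.length = ℓ ∧ v <:+: factor w i j ∧ IsPal v} :=
      length_le_sSup_lengths (fun _ hx => hx.1.length_le) ⟨hv, hpal⟩
    refine max_le (max_le (csSup_le' ?_) (csSup_le' ?_)) (csSup_le' ?_)
    · exact fun _ ⟨_, hv, hvu, hpal⟩ => hv ▸ hinfix hvu.isInfix hpal
    · exact fun _ ⟨_, hv, hvu, hpal⟩ => hv ▸ hinfix hvu.isInfix hpal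
    · rintro _ ⟨a, b, hia, hab, hbj, hpal, -, rfl⟩
      refine le_trans ?_ (hinfix (factor_isInfix_factor w (by omega) (by omega)) hpal)
      rw [factor_length w (by omega)]
      omega

theorem stmt10 {α : Type*} (w : List α) (i j : ℕ) (hij : i ≤ j) (hj : j < w.length) :
    sSup {ℓ : ℕ | ∃ v : List α, v.length = ℓ ∧ v <:+: factor w i j ∧ IsPal v} =
      max (max
        (sSup {ℓ : ℕ | ∃ v : List α, v.length = ℓ ∧ v <+: factor w i j ∧ IsPal v})
        (sSup {ℓ : ℕ | ∃ v : List α, v.length = ℓ ∧ v <:+ factor w i j ∧ IsPal v}))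
        (sSup {ℓ : ℕ | ∃ a b : ℕ, i + 1 ≤ a ∧ a ≤ b ∧ b + 1 ≤ j ∧
          IsPal (factor w a b) ∧
          (a = 0 ∨ b = w.length - 1 ∨ w[a - 1]? ≠ w[b + 1]?) ∧
          ℓ = b - a + 1}) :=
  stmt10_general w i j hj
end
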